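/- arXiv:2508.01914 — 2 statements merged into one kernel-verified Lean document; each statement's English description precedes it below -/
import Mathlib

section
/- Let (Ω, 𝔽, ℙ) be a probability space, H a separable complex Hilbert space, and (Ψ_k)_{k∈ℕ} an i.i.d. sequence of strongly measurable random operators on H taking values in positive contractions, satisfying the coercivity condition 𝔼‖Ψ_k x‖² ≥ C‖x‖² for all x ∈ H with a constant 0 < C < 1. Then for every x ∈ H the limit L(x) = lim_{n→∞} 𝔼[ Σ_{k=1}^{n} ‖Ψ_k (I − Ψ_{k−1})⋯(I − Ψ₁) x‖² ] exists and satisfies the frame bounds C‖x‖² ≤ L(x) ≤ ‖x‖²; that is, the family {Ψ_n (I − Ψ_{n−1})⋯(I − Ψ₁)}_{n∈ℕ} is a random operator-valued frame for H. -/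
open MeasureTheory ProbabilityTheory Filter

/-- The σ-algebra on `B(H)` generated by the point evaluations `T ↦ T x`, i.e. the σ-algebra
corresponding to measurability in the strong operator sense. -/
noncomputable def strongMS (H : Type*) [NormedAddCommGroup H] [InnerProductSpace ℂ H] :
    MeasurableSpace (H →L[ℂ] H) :=
  ⨆ x : H, (borel H).comap fun T => T x

/-- The residual products `R₀ = I`, `R_n(ω) = (I - Ψ_n(ω))⋯(I - Ψ₁(ω))`.
Random operators are indexed starting from `1`, i.e. `Ψ 1, Ψ 2, …`. -/
noncomputable def residualProd {Ω H : Type*} [NormedAddCommGroup H] [InnerProductSpace ℂ H]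
    (Ψ : ℕ → Ω → (H →L[ℂ] H)) (ω : Ω) : ℕ → (H →L[ℂ] H)
  | 0 => 1
  | n + 1 => (1 - Ψ (n + 1) ω) * residualProd Ψ ω n

/-!
For a positive contraction `T` one has `‖T v‖² ≤ re ⟪T v, v⟫`, so that
`‖T v‖² + ‖v - T v‖² ≤ ‖v‖²`. Applied to `T = Ψₖ` and `v = R_{k-1} x`, where `v - T v = R_k x`,
this telescopes to `Σ_{k ≤ n} ‖Ψₖ R_{k-1} x‖² + ‖R_n x‖² ≤ ‖x‖²` for every `ω`. Hence the expected
partial sums increase and are bounded by `‖x‖²`, so they converge to a limit `≤ ‖x‖²`, and the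
limit dominates the first term `𝔼‖Ψ₁ x‖² ≥ C‖x‖²`.
-/

section PositiveContraction

variable {𝕜 E : Type*} [RCLike 𝕜] [NormedAddCommGroup E] [InnerProductSpace 𝕜 E]
  {T : E →L[𝕜] E}

open ContinuousLinearMap in
theorem norm_apply_sq_le_re_inner_apply_self (h0 : 0 ≤ T) (h1 : T ≤ 1) (v : E) :
    ‖T v‖ ^ 2 ≤ RCLike.re (inner 𝕜 (T v) v) := by
  have hT := (nonneg_iff_isPositive T).mp h0
  have hT_sub := hT.re_inner_nonneg_left (v - T v)
  have hOne_sub := ((le_def T 1).mp h1).re_inner_nonneg_left (T v)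
  have hsymm : inner 𝕜 (T (T v)) v = inner 𝕜 (T v) (T v) := hT.inner_left_eq_inner_right _ _
  simp only [map_sub, inner_sub_left, inner_sub_right, sub_apply, one_apply_eq_self, hsymm,
    inner_self_eq_norm_sq] at hT_sub hOne_sub
  linarith

theorem norm_apply_sq_add_norm_sub_apply_sq_le (h0 : 0 ≤ T) (h1 : T ≤ 1) (v : E) :
    ‖T v‖ ^ 2 + ‖v - T v‖ ^ 2 ≤ ‖v‖ ^ 2 := by
  have h := norm_apply_sq_le_re_inner_apply_self h0 h1 v
  rw [@norm_sub_sq 𝕜, inner_re_symm]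
  linarith

end PositiveContraction

theorem Measurable.clm_apply_of_measurable_apply {Ω 𝕜 E F : Type*} [MeasurableSpace Ω]
    [NontriviallyNormedField 𝕜] [NormedAddCommGroup E] [NormedSpace 𝕜 E] [MeasurableSpace E]
    [OpensMeasurableSpace E] [SecondCountableTopology E] [NormedAddCommGroup F]
    [NormedSpace 𝕜 F] [MeasurableSpace F] [BorelSpace F] {u : Ω → E →L[𝕜] F} {G : Ω → E}
    (hG : Measurable G) (hu : ∀ v, Measurable fun ω => u ω v) :
    Measurable fun ω => u ω (G ω) :=
  (measurable_uncurry_of_continuous_of_measurable (u := fun v ω => u ω v)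
    (fun ω => (u ω).continuous) hu).comp (hG.prodMk measurable_id)

section ResidualProd

variable {Ω H : Type*} [NormedAddCommGroup H] [InnerProductSpace ℂ H]
  (Ψ : ℕ → Ω → (H →L[ℂ] H)) (x : H)

theorem residualProd_succ_apply (ω : Ω) (n : ℕ) :
    residualProd Ψ ω (n + 1) x = residualProd Ψ ω n x - Ψ (n + 1) ω (residualProd Ψ ω n x) := by
  simp [residualProd]

noncomputable def partialFrameSum (n : ℕ) (ω : Ω) : ℝ :=
  ∑ k ∈ Finset.Icc 1 n, ‖Ψ k ω (residualProd Ψ ω (k - 1) x)‖ ^ 2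

theorem partialFrameSum_one (ω : Ω) : partialFrameSum Ψ x 1 ω = ‖Ψ 1 ω x‖ ^ 2 := by
  simp [partialFrameSum, residualProd]

theorem partialFrameSum_succ (n : ℕ) (ω : Ω) :
    partialFrameSum Ψ x (n + 1) ω =
      partialFrameSum Ψ x n ω + ‖Ψ (n + 1) ω (residualProd Ψ ω n x)‖ ^ 2 := by
  simp [partialFrameSum, Finset.sum_Icc_succ_top]

theorem monotone_partialFrameSum (ω : Ω) : Monotone fun n => partialFrameSum Ψ x n ω :=
  monotone_nat_of_le_succ fun n => by
    rw [partialFrameSum_succ]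
    exact le_add_of_nonneg_right (sq_nonneg _)

theorem partialFrameSum_nonneg (n : ℕ) (ω : Ω) : 0 ≤ partialFrameSum Ψ x n ω :=
  Finset.sum_nonneg fun _ _ => sq_nonneg _

variable {Ψ}

theorem partialFrameSum_add_norm_residualProd_sq_le {ω : Ω} (hpos : ∀ k, 0 ≤ Ψ k ω)
    (hcontr : ∀ k, Ψ k ω ≤ 1) (n : ℕ) :
    partialFrameSum Ψ x n ω + ‖residualProd Ψ ω n x‖ ^ 2 ≤ ‖x‖ ^ 2 := by
  induction n with
  | zero => simp [partialFrameSum, residualProd]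
  | succ n ih =>
    have := norm_apply_sq_add_norm_sub_apply_sq_le (hpos (n + 1)) (hcontr (n + 1))
      (residualProd Ψ ω n x)
    rw [partialFrameSum_succ, residualProd_succ_apply]
    linarith

theorem partialFrameSum_le_norm_sq {ω : Ω} (hpos : ∀ k, 0 ≤ Ψ k ω) (hcontr : ∀ k, Ψ k ω ≤ 1)
    (n : ℕ) : partialFrameSum Ψ x n ω ≤ ‖x‖ ^ 2 :=
  le_of_add_le_of_nonneg_left (partialFrameSum_add_norm_residualProd_sq_le x hpos hcontr n)
    (sq_nonneg _)

variable [MeasurableSpace Ω] [MeasurableSpace H] [BorelSpace H] [SecondCountableTopology H]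

theorem measurable_residualProd_apply (hmeas : ∀ k v, Measurable fun ω => Ψ k ω v) (n : ℕ) :
    Measurable fun ω => residualProd Ψ ω n x := by
  induction n with
  | zero => simp [residualProd, measurable_const]
  | succ n ih =>
    simp only [residualProd_succ_apply]
    exact ih.sub (ih.clm_apply_of_measurable_apply (hmeas (n + 1)))

theorem measurable_partialFrameSum (hmeas : ∀ k v, Measurable fun ω => Ψ k ω v) (n : ℕ) :
    Measurable (partialFrameSum Ψ x n) :=
  Finset.measurable_sum _ fun k _ =>
    ((measurable_residualProd_apply x hmeas (k - 1)).clm_apply_of_measurable_apply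
      (hmeas k)).norm.pow_const 2

end ResidualProd

theorem random_operator_valued_frame_general
    {Ω : Type*} [MeasureSpace Ω] [IsProbabilityMeasure (ℙ : Measure Ω)]
    {H : Type*} [NormedAddCommGroup H] [InnerProductSpace ℂ H]
    [TopologicalSpace.SeparableSpace H]
    [MeasurableSpace H] [BorelSpace H]
    (Ψ : ℕ → Ω → (H →L[ℂ] H))
    (hmeas : ∀ k, ∀ x : H, Measurable fun ω => Ψ k ω x)
    (hpos : ∀ k ω, 0 ≤ Ψ k ω) (hcontr : ∀ k ω, Ψ k ω ≤ 1)
    (C : ℝ)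
    (hcoer : ∀ k, ∀ x : H, C * ‖x‖ ^ 2 ≤ ∫ ω : Ω, ‖Ψ k ω x‖ ^ 2 ∂(ℙ : Measure Ω))
    (x : H) :
    ∃ L : ℝ,
      Tendsto
        (fun n => ∫ ω : Ω,
          (∑ k ∈ Finset.Icc 1 n, ‖Ψ k ω (residualProd Ψ ω (k - 1) x)‖ ^ 2) ∂(ℙ : Measure Ω))
        atTop (nhds L) ∧
      C * ‖x‖ ^ 2 ≤ L ∧ L ≤ ‖x‖ ^ 2 := by
  have : SecondCountableTopology H := UniformSpace.secondCountable_of_separable H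
  have hle : ∀ n ω, partialFrameSum Ψ x n ω ≤ ‖x‖ ^ 2 := fun n ω =>
    partialFrameSum_le_norm_sq x (hpos · ω) (hcontr · ω) n
  have hint : ∀ n, Integrable (partialFrameSum Ψ x n) := fun n =>
    .of_bound (measurable_partialFrameSum x hmeas n).aestronglyMeasurable (‖x‖ ^ 2)
      (ae_of_all _ fun ω => by
        rw [Real.norm_of_nonneg (partialFrameSum_nonneg Ψ x n ω)]; exact hle n ω)
  have hmono : Monotone fun n => ∫ ω, partialFrameSum Ψ x n ω := fun m n hmn =>
    integral_mono (hint m) (hint n) fun ω => monotone_partialFrameSum Ψ x ω hmn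
  have hbdd : ∀ n, ∫ ω, partialFrameSum Ψ x n ω ≤ ‖x‖ ^ 2 := fun n => by
    simpa using integral_mono (hint n) (integrable_const _) (hle n)
  have hbddAbove : BddAbove (Set.range fun n => ∫ ω, partialFrameSum Ψ x n ω) :=
    ⟨_, Set.forall_mem_range.mpr hbdd⟩
  refine ⟨_, tendsto_atTop_ciSup hmono hbddAbove, ?_, ciSup_le hbdd⟩
  calc C * ‖x‖ ^ 2 ≤ ∫ ω, partialFrameSum Ψ x 1 ω := by
        simpa only [partialFrameSum_one] using hcoer 1 x
    _ ≤ _ := le_ciSup hbddAbove 1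

/-- For an i.i.d. sequence `(Ψ_k)` of strongly measurable random positive
contractions satisfying the coercivity condition with `0 < C < 1`, for every `x ∈ H` the limit
`L(x) = lim_n 𝔼[Σ_{k=1}^n ‖Ψ_k (I - Ψ_{k-1})⋯(I - Ψ₁) x‖²]` exists and satisfies the frame
bounds `C‖x‖² ≤ L(x) ≤ ‖x‖²`: the family `{Ψ_n (I - Ψ_{n-1})⋯(I - Ψ₁)}` is a random
operator-valued frame for `H`. -/
theorem random_operator_valued_frame
    {Ω : Type*} [MeasureSpace Ω] [IsProbabilityMeasure (ℙ : Measure Ω)]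
    {H : Type*} [NormedAddCommGroup H] [InnerProductSpace ℂ H]
    [CompleteSpace H] [TopologicalSpace.SeparableSpace H]
    [MeasurableSpace H] [BorelSpace H]
    (Ψ : ℕ → Ω → (H →L[ℂ] H))
    (hmeas : ∀ k, ∀ x : H, Measurable fun ω => Ψ k ω x)
    (hpos : ∀ k ω, 0 ≤ Ψ k ω) (hcontr : ∀ k ω, Ψ k ω ≤ 1)
    (hindep : iIndepFun (m := fun _ : ℕ => strongMS H) Ψ (ℙ : Measure Ω))
    (hident : ∀ i j : ℕ,
      @IdentDistrib Ω Ω (H →L[ℂ] H) _ _ (strongMS H) (Ψ i) (Ψ j) ℙ ℙ)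
    (C : ℝ) (hC0 : 0 < C) (hC1 : C < 1)
    (hcoer : ∀ k, ∀ x : H, C * ‖x‖ ^ 2 ≤ ∫ ω : Ω, ‖Ψ k ω x‖ ^ 2 ∂(ℙ : Measure Ω))
    (x : H) :
    ∃ L : ℝ,
      Tendsto
        (fun n => ∫ ω : Ω,
          (∑ k ∈ Finset.Icc 1 n, ‖Ψ k ω (residualProd Ψ ω (k - 1) x)‖ ^ 2) ∂(ℙ : Measure Ω))
        atTop (nhds L) ∧
      C * ‖x‖ ^ 2 ≤ L ∧ L ≤ ‖x‖ ^ 2 :=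
  random_operator_valued_frame_general Ψ hmeas hpos hcontr C hcoer x
end

section
/- Let (Ω, 𝔽, ℙ) be a probability space, H a separable complex Hilbert space, and (Ψ_k)_{k∈ℕ} an i.i.d. sequence of strongly measurable random operators on H taking values in selfadjoint (orthogonal) projections, satisfying the coercivity condition 𝔼‖Ψ_k x‖² ≥ C‖x‖² for all x ∈ H with a constant 0 < C < 1. Then for every x ∈ H, lim_{n→∞} 𝔼[ Σ_{k=1}^{n} ‖Ψ_k (I − Ψ_{k−1})⋯(I − Ψ₁) x‖² ] = ‖x‖²; that is, the family {Ψ_n (I − Ψ_{n−1})⋯(I − Ψ₁)}_{n∈ℕ} is a random operator-valued Parseval frame for H. -/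
open MeasureTheory ProbabilityTheory Filter

open scoped ENNReal

/-!
Write `R_n = (I - Ψ_n)⋯(I - Ψ₁)`. Since `Ψ_{n+1}` is an orthogonal projection,
`‖Ψ_{n+1} R_n x‖² + ‖R_{n+1} x‖² = ‖R_n x‖²`, so the partial sums telescope to
`‖x‖² - ‖R_n x‖²`. The vector `R_n x` depends only on `Ψ₁, …, Ψ_n` and is therefore independent
of `Ψ_{n+1}`; freezing it and applying coercivity gives `𝔼‖Ψ_{n+1} R_n x‖² ≥ C 𝔼‖R_n x‖²`, hence
`𝔼‖R_{n+1} x‖² ≤ (1 - C) 𝔼‖R_n x‖²`, and `𝔼‖R_n x‖²` decays geometrically to `0`.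
-/

theorem IsStarProjection.norm_sq_apply_add_norm_sq_sub_apply {𝕜 E : Type*} [RCLike 𝕜]
    [NormedAddCommGroup E] [InnerProductSpace 𝕜 E] [CompleteSpace E] {P : E →L[𝕜] E}
    (hP : IsStarProjection P) (y : E) : ‖P y‖ ^ 2 + ‖y - P y‖ ^ 2 = ‖y‖ ^ 2 := by
  obtain ⟨K, _, rfl⟩ := isStarProjection_iff_eq_starProjection.mp hP
  rw [K.norm_sq_eq_add_norm_sq_starProjection y, K.starProjection_orthogonal']
  rfl

theorem measurable_fst_apply_snd {𝕜 E F : Type*} [NontriviallyNormedField 𝕜]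
    [NormedAddCommGroup E] [NormedSpace 𝕜 E] [TopologicalSpace.SeparableSpace E]
    [MeasurableSpace E] [BorelSpace E] [NormedAddCommGroup F] [NormedSpace 𝕜 F]
    [MeasurableSpace F] [BorelSpace F] {mB : MeasurableSpace (E →L[𝕜] F)}
    (hmB : ∀ y : E, Measurable fun T : E →L[𝕜] F => T y) :
    Measurable fun p : (E →L[𝕜] F) × E => p.1 p.2 :=
  haveI := UniformSpace.secondCountable_of_separable E
  (measurable_uncurry_of_continuous_of_measurable (u := fun y (T : E →L[𝕜] F) => T y)
    (fun T => T.continuous) hmB).comp measurable_swap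

section StrongMeasurability

variable {H : Type*} [NormedAddCommGroup H] [InnerProductSpace ℂ H] [MeasurableSpace H]
  [BorelSpace H]

theorem measurable_apply_strongMS (y : H) :
    @Measurable _ _ (strongMS H) _ fun T : H →L[ℂ] H => T y := by
  rw [BorelSpace.measurable_eq (α := H)]
  exact measurable_iff_comap_le.mpr
    (le_iSup (fun x : H => (borel H).comap fun T : H →L[ℂ] H => T x) y)

theorem measurable_strongMS_iff {α : Type*} [MeasurableSpace α] {f : α → H →L[ℂ] H} :
    @Measurable _ _ _ (strongMS H) f ↔ ∀ y, Measurable fun a => f a y := by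
  refine ⟨fun hf y => (measurable_apply_strongMS y).comp hf, fun hf => ?_⟩
  rw [measurable_iff_comap_le, strongMS, MeasurableSpace.comap_iSup]
  refine iSup_le fun y => ?_
  rw [MeasurableSpace.comap_comp, ← BorelSpace.measurable_eq]
  exact (hf y).comap_le

end StrongMeasurability

theorem ProbabilityTheory.iIndepFun.indepFun_of_measurable_biSup {Ω ι β γ : Type*}
    {mΩ : MeasurableSpace Ω} {μ : Measure Ω} {mβ : MeasurableSpace β} [MeasurableSpace γ]
    {f : ι → Ω → β} (hf : iIndepFun f μ) (hfm : ∀ i, Measurable (f i)) {i : ι} {S : Set ι}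
    (hi : i ∉ S) {Y : Ω → γ} (hY : Measurable[⨆ j ∈ S, mβ.comap (f j)] Y) :
    IndepFun (f i) Y μ := by
  have h := indep_iSup_of_disjoint (fun j => (hfm j).comap_le) hf.iIndep
    (Set.disjoint_singleton_left.mpr hi)
  rw [iSup_singleton] at h
  exact (IndepFun_iff_Indep _ _ _).mpr (indep_of_indep_of_le_right h hY.comap_le)

theorem ProbabilityTheory.IndepFun.lintegral_comp_eq_lintegral_lintegral
    {Ω E F : Type*} {mΩ : MeasurableSpace Ω} [MeasurableSpace E] [MeasurableSpace F]
    {μ : Measure Ω} [IsFiniteMeasure μ] {X : Ω → E} {Y : Ω → F} (hXY : IndepFun X Y μ)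
    (hX : Measurable X) (hY : Measurable Y) {g : E → F → ℝ≥0∞}
    (hg : Measurable (Function.uncurry g)) :
    ∫⁻ ω, g (X ω) (Y ω) ∂μ = ∫⁻ ω, ∫⁻ ω', g (X ω') (Y ω) ∂μ ∂μ := by
  calc ∫⁻ ω, g (X ω) (Y ω) ∂μ
      = ∫⁻ p, Function.uncurry g p ∂((μ.map X).prod (μ.map Y)) := by
        rw [← hXY.map_prod_eq_prod_map_map hX.aemeasurable hY.aemeasurable,
          lintegral_map hg (hX.prodMk hY)]
        rfl
    _ = ∫⁻ y, ∫⁻ x, g x y ∂(μ.map X) ∂(μ.map Y) := lintegral_prod_symm' _ hg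
    _ = ∫⁻ ω, ∫⁻ ω', g (X ω') (Y ω) ∂μ ∂μ := by
        rw [lintegral_map (f := fun y => ∫⁻ x, g x y ∂(μ.map X)) hg.lintegral_prod_left' hY]
        exact lintegral_congr fun ω =>
          lintegral_map (hg.comp (measurable_id.prodMk measurable_const)) hX

theorem ProbabilityTheory.IndepFun.integral_comp_le_integral_of_le_integral
    {Ω E F : Type*} {mΩ : MeasurableSpace Ω} [MeasurableSpace E] [MeasurableSpace F]
    {μ : Measure Ω} [IsFiniteMeasure μ] {X : Ω → E} {Y : Ω → F} (hXY : IndepFun X Y μ)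
    (hX : Measurable X) (hY : Measurable Y) {f : E → F → ℝ}
    (hf : Measurable (Function.uncurry f)) (hf0 : ∀ a b, 0 ≤ f a b)
    (hint : Integrable (fun ω => f (X ω) (Y ω)) μ) {c : F → ℝ} (hc : Measurable c)
    (hc0 : ∀ b, 0 ≤ c b) (hcf : ∀ b, c b ≤ ∫ ω, f (X ω) b ∂μ) :
    ∫ ω, c (Y ω) ∂μ ≤ ∫ ω, f (X ω) (Y ω) ∂μ := by
  have hfXY : Measurable fun ω => f (X ω) (Y ω) := hf.comp (hX.prodMk hY)
  rw [integral_eq_lintegral_of_nonneg_ae (ae_of_all _ fun ω => hc0 _)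
      (hc.comp hY).aestronglyMeasurable,
    integral_eq_lintegral_of_nonneg_ae (ae_of_all _ fun ω => hf0 _ _) hfXY.aestronglyMeasurable]
  refine ENNReal.toReal_mono
    ((lintegral_ofReal_ne_top_iff_integrable hfXY.aestronglyMeasurable
      (ae_of_all _ fun ω => hf0 _ _)).mpr hint) ?_
  rw [hXY.lintegral_comp_eq_lintegral_lintegral (g := fun a b => ENNReal.ofReal (f a b)) hX hY
    (ENNReal.measurable_ofReal.comp hf)]
  refine lintegral_mono fun ω => (ENNReal.ofReal_le_ofReal (hcf _)).trans ?_
  calc ENNReal.ofReal (∫ ω', f (X ω') (Y ω) ∂μ)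
      ≤ ‖∫ ω', f (X ω') (Y ω) ∂μ‖ₑ := Real.ofReal_le_enorm _
    _ ≤ ∫⁻ ω', ‖f (X ω') (Y ω)‖ₑ ∂μ := enorm_integral_le_lintegral_enorm _
    _ = ∫⁻ ω', ENNReal.ofReal (f (X ω') (Y ω)) ∂μ := by
        simp_rw [Real.enorm_of_nonneg (hf0 _ _)]

namespace residualProd

variable {Ω H : Type*} [NormedAddCommGroup H] [InnerProductSpace ℂ H]
  {Ψ : ℕ → Ω → (H →L[ℂ] H)}

theorem succ_apply (ω : Ω) (n : ℕ) (x : H) :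
    residualProd Ψ ω (n + 1) x = residualProd Ψ ω n x - Ψ (n + 1) ω (residualProd Ψ ω n x) := by
  simp [residualProd]

section Projections

variable [CompleteSpace H] {ω : Ω} (hΨ : ∀ k, IsStarProjection (Ψ k ω)) (x : H)
include hΨ

theorem norm_sq_apply_add_norm_sq_succ (n : ℕ) :
    ‖Ψ (n + 1) ω (residualProd Ψ ω n x)‖ ^ 2 + ‖residualProd Ψ ω (n + 1) x‖ ^ 2
      = ‖residualProd Ψ ω n x‖ ^ 2 := by
  rw [succ_apply]
  exact (hΨ (n + 1)).norm_sq_apply_add_norm_sq_sub_apply _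

theorem norm_apply_le (n : ℕ) : ‖residualProd Ψ ω n x‖ ≤ ‖x‖ := by
  induction n with
  | zero => simp [residualProd]
  | succ n ih =>
    refine le_trans ?_ ih
    refine (pow_le_pow_iff_left₀ (norm_nonneg _) (norm_nonneg _) two_ne_zero).mp ?_
    linarith [norm_sq_apply_add_norm_sq_succ hΨ x n,
      sq_nonneg ‖Ψ (n + 1) ω (residualProd Ψ ω n x)‖]

theorem sum_norm_sq_apply_eq (n : ℕ) :
    ∑ k ∈ Finset.Icc 1 n, ‖Ψ k ω (residualProd Ψ ω (k - 1) x)‖ ^ 2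
      = ‖x‖ ^ 2 - ‖residualProd Ψ ω n x‖ ^ 2 := by
  induction n with
  | zero => simp [residualProd]
  | succ n ih =>
    rw [Finset.sum_Icc_succ_top (Nat.le_add_left 1 n), ih, Nat.add_sub_cancel]
    linarith [norm_sq_apply_add_norm_sq_succ hΨ x n]

end Projections

theorem measurable_apply [MeasurableSpace H] [BorelSpace H]
    [TopologicalSpace.SeparableSpace H] {m : MeasurableSpace Ω}
    {mB : MeasurableSpace (H →L[ℂ] H)} (hmB : ∀ y : H, Measurable fun T : H →L[ℂ] H => T y)
    {n : ℕ} (hΨ : ∀ k ∈ Set.Icc 1 n, Measurable[m] (Ψ k)) (x : H) :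
    Measurable[m] fun ω => residualProd Ψ ω n x := by
  induction n with
  | zero => simp [residualProd]
  | succ n ih =>
    have hR := ih fun k hk => hΨ k ⟨hk.1, hk.2.trans n.le_succ⟩
    have hΨn : Measurable[m] (Ψ (n + 1)) := hΨ (n + 1) ⟨Nat.le_add_left 1 n, le_rfl⟩
    simp_rw [succ_apply]
    exact hR.sub ((measurable_fst_apply_snd hmB).comp (hΨn.prodMk hR))

section Random

variable [CompleteSpace H] [TopologicalSpace.SeparableSpace H] [MeasurableSpace H] [BorelSpace H]
  {mΩ : MeasurableSpace Ω} {μ : Measure Ω} [IsFiniteMeasure μ]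
  {mB : MeasurableSpace (H →L[ℂ] H)} (hmB : ∀ y : H, Measurable fun T : H →L[ℂ] H => T y)
  (hΨm : ∀ k, Measurable (Ψ k)) (hΨ : ∀ k ω, IsStarProjection (Ψ k ω))
include hmB hΨm hΨ

theorem integrable_norm_sq_apply (x : H) (n : ℕ) :
    Integrable (fun ω => ‖residualProd Ψ ω n x‖ ^ 2) μ :=
  .of_bound ((measurable_apply hmB (fun k _ => hΨm k) x).norm.pow_const 2).aestronglyMeasurable
    (‖x‖ ^ 2) (ae_of_all _ fun ω => by
      rw [Real.norm_of_nonneg (by positivity)]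
      exact pow_le_pow_left₀ (norm_nonneg _) (norm_apply_le (hΨ · ω) x n) 2)

theorem integral_norm_sq_succ_le (hindep : iIndepFun Ψ μ) {C : ℝ} (hC : 0 ≤ C) (x : H) (n : ℕ)
    (hcoer : ∀ y, C * ‖y‖ ^ 2 ≤ ∫ ω, ‖Ψ (n + 1) ω y‖ ^ 2 ∂μ) :
    ∫ ω, ‖residualProd Ψ ω (n + 1) x‖ ^ 2 ∂μ ≤ (1 - C) * ∫ ω, ‖residualProd Ψ ω n x‖ ^ 2 ∂μ := by
  have hR := measurable_apply hmB (fun k _ => hΨm k) (n := n) x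
  have hΨR := (measurable_fst_apply_snd hmB).comp ((hΨm (n + 1)).prodMk hR)
  have hΨR_le : ∀ ω, ‖Ψ (n + 1) ω (residualProd Ψ ω n x)‖ ^ 2 ≤ ‖x‖ ^ 2 := fun ω => by
    have := norm_sq_apply_add_norm_sq_succ (hΨ · ω) x n
    nlinarith [norm_apply_le (hΨ · ω) x n, norm_nonneg (residualProd Ψ ω n x)]
  have hΨR_int : Integrable (fun ω => ‖Ψ (n + 1) ω (residualProd Ψ ω n x)‖ ^ 2) μ :=
    .of_bound (hΨR.norm.pow_const 2).aestronglyMeasurable (‖x‖ ^ 2)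
      (ae_of_all _ fun ω => by rw [Real.norm_of_nonneg (by positivity)]; exact hΨR_le ω)
  have hind : IndepFun (Ψ (n + 1)) (fun ω => residualProd Ψ ω n x) μ :=
    hindep.indepFun_of_measurable_biSup hΨm (S := Set.Icc 1 n) (by simp)
      (measurable_apply hmB (fun k hk => measurable_iff_comap_le.mpr
        (le_biSup (fun j => mB.comap (Ψ j)) hk)) x)
  have hcoer_R : C * ∫ ω, ‖residualProd Ψ ω n x‖ ^ 2 ∂μ
      ≤ ∫ ω, ‖Ψ (n + 1) ω (residualProd Ψ ω n x)‖ ^ 2 ∂μ := by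
    rw [← integral_const_mul]
    exact hind.integral_comp_le_integral_of_le_integral (hΨm _) hR
      (f := fun T y => ‖T y‖ ^ 2) ((measurable_fst_apply_snd hmB).norm.pow_const 2)
      (fun _ _ => by positivity) hΨR_int (c := fun y => C * ‖y‖ ^ 2)
      ((measurable_norm.pow_const 2).const_mul C) (fun _ => by positivity) hcoer
  calc ∫ ω, ‖residualProd Ψ ω (n + 1) x‖ ^ 2 ∂μ
      = ∫ ω, (‖residualProd Ψ ω n x‖ ^ 2 - ‖Ψ (n + 1) ω (residualProd Ψ ω n x)‖ ^ 2) ∂μ := by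
        refine integral_congr_ae (ae_of_all _ fun ω => ?_)
        linarith [norm_sq_apply_add_norm_sq_succ (hΨ · ω) x n]
    _ = ∫ ω, ‖residualProd Ψ ω n x‖ ^ 2 ∂μ
          - ∫ ω, ‖Ψ (n + 1) ω (residualProd Ψ ω n x)‖ ^ 2 ∂μ :=
        integral_sub (integrable_norm_sq_apply hmB hΨm hΨ x n) hΨR_int
    _ ≤ (1 - C) * ∫ ω, ‖residualProd Ψ ω n x‖ ^ 2 ∂μ := by linarith

theorem tendsto_integral_norm_sq_apply (hindep : iIndepFun Ψ μ) {C : ℝ} (hC0 : 0 < C)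
    (hC1 : C < 1) (hcoer : ∀ k y, C * ‖y‖ ^ 2 ≤ ∫ ω, ‖Ψ k ω y‖ ^ 2 ∂μ) (x : H) :
    Tendsto (fun n => ∫ ω, ‖residualProd Ψ ω n x‖ ^ 2 ∂μ) atTop (nhds 0) := by
  have hgeom := (tendsto_pow_atTop_nhds_zero_of_lt_one (sub_nonneg.mpr hC1.le)
    (sub_lt_self 1 hC0)).mul_const (∫ ω, ‖residualProd Ψ ω 0 x‖ ^ 2 ∂μ)
  rw [zero_mul] at hgeom
  refine squeeze_zero (fun n => integral_nonneg fun ω => by positivity) (fun n => ?_) hgeom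
  exact le_geom (u := fun n => ∫ ω, ‖residualProd Ψ ω n x‖ ^ 2 ∂μ) (sub_nonneg.mpr hC1.le) n
    fun k _ => integral_norm_sq_succ_le hmB hΨm hΨ hindep hC0.le x k (hcoer (k + 1))

end Random

end residualProd

theorem random_operator_valued_parseval_frame_general
    {Ω : Type*} [MeasureSpace Ω] [IsProbabilityMeasure (ℙ : Measure Ω)]
    {H : Type*} [NormedAddCommGroup H] [InnerProductSpace ℂ H]
    [CompleteSpace H] [TopologicalSpace.SeparableSpace H]
    [MeasurableSpace H] [BorelSpace H]
    (Ψ : ℕ → Ω → (H →L[ℂ] H))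
    (hmeas : ∀ k, ∀ x : H, Measurable fun ω => Ψ k ω x)
    (hsa : ∀ k ω, IsSelfAdjoint (Ψ k ω)) (hproj : ∀ k ω, Ψ k ω * Ψ k ω = Ψ k ω)
    (hindep : iIndepFun (m := fun _ : ℕ => strongMS H) Ψ (ℙ : Measure Ω))
    (C : ℝ) (hC0 : 0 < C) (hC1 : C < 1)
    (hcoer : ∀ k, ∀ x : H, C * ‖x‖ ^ 2 ≤ ∫ ω : Ω, ‖Ψ k ω x‖ ^ 2 ∂(ℙ : Measure Ω))
    (x : H) :
    Tendsto
      (fun n => ∫ ω : Ω,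
        (∑ k ∈ Finset.Icc 1 n, ‖Ψ k ω (residualProd Ψ ω (k - 1) x)‖ ^ 2) ∂(ℙ : Measure Ω))
      atTop (nhds (‖x‖ ^ 2)) := by
  let _ : MeasurableSpace (H →L[ℂ] H) := strongMS H
  have hΨm k : Measurable (Ψ k) := measurable_strongMS_iff.mpr (hmeas k)
  have hΨ k ω : IsStarProjection (Ψ k ω) := ⟨hproj k ω, hsa k ω⟩
  have hsum n : ∫ ω, (∑ k ∈ Finset.Icc 1 n, ‖Ψ k ω (residualProd Ψ ω (k - 1) x)‖ ^ 2)
      = ‖x‖ ^ 2 - ∫ ω, ‖residualProd Ψ ω n x‖ ^ 2 := by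
    simp_rw [residualProd.sum_norm_sq_apply_eq (hΨ · _)]
    rw [integral_sub (integrable_const _)
      (residualProd.integrable_norm_sq_apply measurable_apply_strongMS hΨm hΨ x n)]
    simp
  simp_rw [hsum]
  simpa using tendsto_const_nhds.sub <| residualProd.tendsto_integral_norm_sq_apply
    measurable_apply_strongMS hΨm hΨ hindep hC0 hC1 hcoer x

/-- For an i.i.d. sequence `(Ψ_k)` of strongly measurable random selfadjoint
projections satisfying the coercivity condition with `0 < C < 1`, for every `x ∈ H`,
`lim_n 𝔼[Σ_{k=1}^n ‖Ψ_k (I - Ψ_{k-1})⋯(I - Ψ₁) x‖²] = ‖x‖²`: the family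
`{Ψ_n (I - Ψ_{n-1})⋯(I - Ψ₁)}` is a random operator-valued Parseval frame for `H`. -/
theorem random_operator_valued_parseval_frame
    {Ω : Type*} [MeasureSpace Ω] [IsProbabilityMeasure (ℙ : Measure Ω)]
    {H : Type*} [NormedAddCommGroup H] [InnerProductSpace ℂ H]
    [CompleteSpace H] [TopologicalSpace.SeparableSpace H]
    [MeasurableSpace H] [BorelSpace H]
    (Ψ : ℕ → Ω → (H →L[ℂ] H))
    (hmeas : ∀ k, ∀ x : H, Measurable fun ω => Ψ k ω x)
    (hsa : ∀ k ω, IsSelfAdjoint (Ψ k ω)) (hproj : ∀ k ω, Ψ k ω * Ψ k ω = Ψ k ω)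
    (hindep : iIndepFun (m := fun _ : ℕ => strongMS H) Ψ (ℙ : Measure Ω))
    (hident : ∀ i j : ℕ,
      @IdentDistrib Ω Ω (H →L[ℂ] H) _ _ (strongMS H) (Ψ i) (Ψ j) ℙ ℙ)
    (C : ℝ) (hC0 : 0 < C) (hC1 : C < 1)
    (hcoer : ∀ k, ∀ x : H, C * ‖x‖ ^ 2 ≤ ∫ ω : Ω, ‖Ψ k ω x‖ ^ 2 ∂(ℙ : Measure Ω))
    (x : H) :
    Tendsto
      (fun n => ∫ ω : Ω,
        (∑ k ∈ Finset.Icc 1 n, ‖Ψ k ω (residualProd Ψ ω (k - 1) x)‖ ^ 2) ∂(ℙ : Measure Ω))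
      atTop (nhds (‖x‖ ^ 2)) :=
  random_operator_valued_parseval_frame_general Ψ hmeas hsa hproj hindep C hC0 hC1 hcoer x
end
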